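/- arXiv:2103.03410 — 2 statements merged into one kernel-verified Lean document; each statement's English description precedes it below -/
import Mathlib

section
/- Let α ∈ (0,1), T ∈ (0,∞), and let u, η ∈ C^1([0,T]) with u(0) = 0 and η(T) = 0. Then ∫_0^T u'(t) η(t) dt = − ∫_0^T ∂_t^α u(t) · J_T^α η'(t) dt, where ∂_t^α u(t) = (1/Γ(1−α)) ∫_0^t (t−s)^{−α} u'(s) ds is the Caputo derivative of u and J_T^α v(t) = (1/Γ(α)) ∫_t^T (s−t)^{α−1} v(s) ds. -/
open MeasureTheory Set

noncomputable section

/-- The Caputo fractional derivative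
`∂_t^α u(t) = (1/Γ(1−α)) ∫_0^t (t−s)^{−α} u'(s) ds`. -/
def caputo1 (α : ℝ) (u : ℝ → ℝ) (t : ℝ) : ℝ :=
  (1 / Real.Gamma (1 - α)) * ∫ s in Ioo (0:ℝ) t, (t - s) ^ (-α) * deriv u s

/-- The right-sided Riemann–Liouville fractional integral
`J_T^α v(t) = (1/Γ(α)) ∫_t^T (s−t)^{α−1} v(s) ds`. -/
def rightInt (α T : ℝ) (v : ℝ → ℝ) (t : ℝ) : ℝ :=
  (1 / Real.Gamma α) * ∫ s in Ioo t T, (s - t) ^ (α - 1) * v s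

end

/-!
The Caputo derivative is the left Riemann–Liouville integral `I^{1-α} u'`. Exchanging the order
of integration over the triangle `0 < s < t < T` moves this integral onto the other factor:
`∫ I^{1-α} u' · φ = ∫ u' · J_T^{1-α} φ`. With `φ = J_T^α η'`, the semigroup law
`J_T^{1-α} J_T^α = J_T^1` (again Fubini, the inner integral being the Beta integral
`∫_s^r (t - s)^{β-1} (r - t)^{α-1} dt = (r - s)^{α+β-1} Γ(α) Γ(β) / Γ(α + β)`) leaves
`J_T^1 η' (s) = η(T) - η(s) = -η(s)`. Every exchange is justified because `(t - s)^γ` is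
integrable for `γ > -1`, one remaining factor is integrable and the other bounded.
-/

theorem integral_Ioo_sub_rpow_mul_sub_rpow {a b p q : ℝ} (hab : a < b) (hp : 0 < p) (hq : 0 < q) :
    ∫ t in Ioo a b, (t - a) ^ (p - 1) * (b - t) ^ (q - 1) =
      (b - a) ^ (p + q - 1) * (Real.Gamma p * Real.Gamma q / Real.Gamma (p + q)) := by
  have hc : 0 < b - a := sub_pos.mpr hab
  have hshift : ∫ t in Ioo a b, (t - a) ^ (p - 1) * (b - t) ^ (q - 1) =
      ∫ x in 0..(b - a), x ^ (p - 1) * (b - a - x) ^ (q - 1) := by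
    rw [← integral_Ioc_eq_integral_Ioo, ← intervalIntegral.integral_of_le hab.le,
      ← sub_self a, ← intervalIntegral.integral_comp_sub_right]
    simp only [sub_sub_sub_cancel_right]
  apply Complex.ofReal_injective
  rw [hshift, ← intervalIntegral.integral_ofReal]
  have hcast : ∀ x ∈ uIcc 0 (b - a), (((x ^ (p - 1) * (b - a - x) ^ (q - 1) : ℝ)) : ℂ) =
      (x : ℂ) ^ ((p : ℂ) - 1) * (((b - a : ℝ) : ℂ) - x) ^ ((q : ℂ) - 1) := by
    intro x hx
    rw [uIcc_of_le hc.le] at hx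
    rw [Complex.ofReal_mul, Complex.ofReal_cpow hx.1, Complex.ofReal_cpow (by linarith [hx.2])]
    push_cast
    rfl
  rw [intervalIntegral.integral_congr hcast, Complex.betaIntegral_scaled _ _ hc,
    Complex.betaIntegral_eq_Gamma_mul_div _ _ (by simpa) (by simpa), ← Complex.ofReal_add,
    Complex.Gamma_ofReal, Complex.Gamma_ofReal, Complex.Gamma_ofReal,
    Complex.ofReal_mul, Complex.ofReal_cpow hc.le]
  push_cast
  rfl

theorem integrableOn_Ioo_sub_rpow {β : ℝ} (hβ : -1 < β) (c d : ℝ) :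
    IntegrableOn (fun y => (y - c) ^ β) (Ioo c d) := by
  rcases le_or_gt c d with h | h
  · have h1 :=
      (intervalIntegral.intervalIntegrable_rpow' hβ (a := 0) (b := d - c)).comp_sub_right c
    simp only [zero_add, sub_add_cancel] at h1
    exact ((intervalIntegrable_iff_integrableOn_Ioc_of_le h).mp h1).mono_set Ioo_subset_Ioc_self
  · simp [Ioo_eq_empty_of_le h.le]

theorem integral_Ioo_sub_rpow {β : ℝ} (hβ : -1 < β) {c d : ℝ} (h : c ≤ d) :
    ∫ y in Ioo c d, (y - c) ^ β = (d - c) ^ (β + 1) / (β + 1) := by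
  rw [← integral_Ioc_eq_integral_Ioo, ← intervalIntegral.integral_of_le h,
    intervalIntegral.integral_comp_sub_right (fun x : ℝ => x ^ β), sub_self,
    integral_rpow (Or.inl hβ), Real.zero_rpow (by linarith), sub_zero]

theorem integral_Ioo_integral_Ioo_swap {a b : ℝ} {F : ℝ → ℝ → ℝ}
    (hF : Integrable (fun p : ℝ × ℝ => if p.1 < p.2 then F p.1 p.2 else 0)
      ((volume.restrict (Ioo a b)).prod (volume.restrict (Ioo a b)))) :
    ∫ t in Ioo a b, ∫ s in Ioo a t, F s t = ∫ s in Ioo a b, ∫ t in Ioo s b, F s t := by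
  have inner_fst : ∀ t ∈ Ioo a b,
      ∫ s in Ioo a b, (if s < t then F s t else 0) = ∫ s in Ioo a t, F s t := fun t ht => by
    simp_rw [← mem_Iio, ← indicator_apply (Iio t) (F · t)]
    rw [setIntegral_indicator measurableSet_Iio, Ioo_inter_Iio, min_eq_right ht.2.le]
  have inner_snd : ∀ s ∈ Ioo a b,
      ∫ t in Ioo a b, (if s < t then F s t else 0) = ∫ t in Ioo s b, F s t := fun s hs => by
    simp_rw [← mem_Ioi, ← indicator_apply (Ioi s) (F s)]
    rw [setIntegral_indicator measurableSet_Ioi, Ioo_inter_Ioi, max_eq_right hs.1.le]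
  rw [← setIntegral_congr_fun measurableSet_Ioo inner_fst,
    ← setIntegral_congr_fun measurableSet_Ioo inner_snd]
  exact (integral_integral_swap hF).symm

theorem integrable_mul_indicator_sub_rpow {β a b : ℝ} (hβ : -1 < β) {v : ℝ → ℝ}
    (hv : Measurable v) (hvi : IntegrableOn v (Ioo a b)) :
    Integrable (fun p : ℝ × ℝ => v p.1 * (Ioo p.1 b).indicator (fun y => (y - p.1) ^ β) p.2)
      ((volume.restrict (Ioo a b)).prod (volume.restrict (Ioo a b))) := by
  have hGm : Measurable (fun p : ℝ × ℝ =>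
      v p.1 * (Ioo p.1 b).indicator (fun y => (y - p.1) ^ β) p.2) := by
    simp only [indicator_apply, mem_Ioo]
    refine (hv.comp measurable_fst).mul (Measurable.ite ?_ (by fun_prop) measurable_const)
    exact (measurableSet_lt measurable_fst measurable_snd).inter
      (measurableSet_lt measurable_snd measurable_const)
  have hsection : ∀ x, Integrable (fun y => v x * (Ioo x b).indicator (fun y => (y - x) ^ β) y)
      (volume.restrict (Ioo a b)) := fun x =>
    ((integrableOn_Ioo_sub_rpow hβ x b).integrable_indicator
      measurableSet_Ioo).restrict.const_mul _
  have hβ1 : 0 < β + 1 := by linarith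
  rw [integrable_prod_iff hGm.aestronglyMeasurable]
  refine ⟨.of_forall hsection, (hvi.norm.const_mul ((b - a) ^ (β + 1) / (β + 1))).mono'
    hGm.norm.aestronglyMeasurable.integral_prod_right' ?_⟩
  filter_upwards [ae_restrict_mem measurableSet_Ioo] with x hx
  have hind : ∀ y, 0 ≤ (Ioo x b).indicator (fun y => (y - x) ^ β) y :=
    indicator_nonneg fun y hy => Real.rpow_nonneg (sub_nonneg.mpr hy.1.le) _
  simp only [norm_mul, Real.norm_of_nonneg (hind _), integral_const_mul,
    setIntegral_indicator measurableSet_Ioo, Ioo_inter_Ioo, max_eq_right hx.1.le, min_self,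
    integral_Ioo_sub_rpow hβ hx.2.le, norm_norm]
  have hpow : 0 ≤ (b - x) ^ (β + 1) := Real.rpow_nonneg (sub_nonneg.mpr hx.2.le) _
  rw [norm_div, Real.norm_of_nonneg hpow, Real.norm_of_nonneg hβ1.le, mul_comm]
  gcongr
  · linarith [hx.2]
  · linarith [hx.1]

theorem integrable_triangle_mul_sub_rpow_mul {β a b M : ℝ} (hβ : -1 < β) {v w : ℝ → ℝ}
    (hv : Measurable v) (hvi : IntegrableOn v (Ioo a b))
    (hw : Measurable w) (hwM : ∀ y ∈ Ioo a b, |w y| ≤ M) :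
    Integrable (fun p : ℝ × ℝ => if p.1 < p.2 then v p.1 * (p.2 - p.1) ^ β * w p.2 else 0)
      ((volume.restrict (Ioo a b)).prod (volume.restrict (Ioo a b))) := by
  refine ((integrable_mul_indicator_sub_rpow hβ hv hvi).norm.mul_const M).mono'
    (Measurable.ite (measurableSet_lt measurable_fst measurable_snd) (by fun_prop)
      measurable_const).aestronglyMeasurable ?_
  rw [Measure.prod_restrict]
  filter_upwards [ae_restrict_mem (measurableSet_Ioo.prod measurableSet_Ioo)] with ⟨x, y⟩ hmem
  obtain ⟨-, hy⟩ := hmem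
  by_cases hxy : x < y
  · have hpow : 0 ≤ (y - x) ^ β := Real.rpow_nonneg (sub_nonneg.mpr hxy.le) _
    simp only [hxy, if_true, indicator_of_mem (mem_Ioo.mpr ⟨hxy, hy.2⟩), norm_mul,
      Real.norm_eq_abs, abs_of_nonneg hpow]
    gcongr
    exact hwM y hy
  · simp [hxy]

noncomputable def leftInt (β : ℝ) (w : ℝ → ℝ) (t : ℝ) : ℝ :=
  (1 / Real.Gamma β) * ∫ s in Ioo (0:ℝ) t, (t - s) ^ (β - 1) * w s

theorem caputo1_eq_leftInt (α : ℝ) (u : ℝ → ℝ) :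
    caputo1 α u = leftInt (1 - α) (deriv u) := by
  funext t
  rw [caputo1, leftInt, sub_sub_cancel_left]

theorem measurable_rightInt (α T : ℝ) {v : ℝ → ℝ} (hv : Measurable v) :
    Measurable (rightInt α T v) := by
  have hF : Measurable (fun p : ℝ × ℝ =>
      (Ioo p.1 T).indicator (fun s => (s - p.1) ^ (α - 1) * v s) p.2) := by
    simp only [indicator_apply, mem_Ioo]
    refine Measurable.ite ?_ (by fun_prop) measurable_const
    exact (measurableSet_lt measurable_fst measurable_snd).inter
      (measurableSet_lt measurable_snd measurable_const)
  have hrepr : rightInt α T v = fun t => 1 / Real.Gamma α *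
      ∫ s, (Ioo t T).indicator (fun s => (s - t) ^ (α - 1) * v s) s := by
    funext t
    rw [rightInt, integral_indicator measurableSet_Ioo]
  rw [hrepr]
  exact measurable_const.mul hF.stronglyMeasurable.integral_prod_right'.measurable

theorem abs_rightInt_le {α T a M : ℝ} (hα : 0 < α) {v : ℝ → ℝ}
    (hvM : ∀ y ∈ Icc a T, |v y| ≤ M) {t : ℝ} (ht : t ∈ Icc a T) :
    |rightInt α T v t| ≤ M * (T - a) ^ α / Real.Gamma (α + 1) := by
  have hbound : |∫ s in Ioo t T, (s - t) ^ (α - 1) * v s| ≤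
      ∫ s in Ioo t T, M * (s - t) ^ (α - 1) := by
    rw [← Real.norm_eq_abs]
    refine norm_integral_le_of_norm_le
      ((integrableOn_Ioo_sub_rpow (by linarith) t T).const_mul M) ?_
    filter_upwards [ae_restrict_mem measurableSet_Ioo] with s hs
    have hpow : 0 ≤ (s - t) ^ (α - 1) := Real.rpow_nonneg (sub_nonneg.mpr hs.1.le) _
    rw [Real.norm_eq_abs, abs_mul, abs_of_nonneg hpow, mul_comm]
    exact mul_le_mul_of_nonneg_right (hvM s ⟨ht.1.trans hs.1.le, hs.2.le⟩) hpow
  rw [integral_const_mul, integral_Ioo_sub_rpow (by linarith) ht.2, sub_add_cancel] at hbound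
  have hM : 0 ≤ M := (abs_nonneg _).trans (hvM a ⟨le_rfl, ht.1.trans ht.2⟩)
  calc |rightInt α T v t| ≤ (1 / Real.Gamma α) * (M * ((T - t) ^ α / α)) := by
        rw [rightInt, abs_mul, abs_of_pos (by positivity)]
        gcongr
    _ ≤ (1 / Real.Gamma α) * (M * ((T - a) ^ α / α)) := by
        gcongr
        · linarith [ht.2]
        · linarith [ht.1]
    _ = M * (T - a) ^ α / Real.Gamma (α + 1) := by
        rw [Real.Gamma_add_one hα.ne']
        field_simp

theorem rightInt_rightInt {α β T M s : ℝ} (hα : 0 < α) (hβ : 0 < β) {v : ℝ → ℝ}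
    (hv : Measurable v) (hvM : ∀ y ∈ Ioo s T, |v y| ≤ M) :
    rightInt β T (rightInt α T v) s = rightInt (α + β) T v s := by
  have hkernel : ∀ r ∈ Ioo s T, ∫ t in Ioo s r, (t - s) ^ (β - 1) * (r - t) ^ (α - 1) =
      (r - s) ^ (α + β - 1) * (Real.Gamma β * Real.Gamma α / Real.Gamma (α + β)) :=
    fun r hr => by
    rw [integral_Ioo_sub_rpow_mul_sub_rpow hr.1 hβ hα, add_comm β]
  calc rightInt β T (rightInt α T v) s
      = 1 / Real.Gamma β * (1 / Real.Gamma α * ∫ t in Ioo s T, ∫ r in Ioo t T,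
          (t - s) ^ (β - 1) * (r - t) ^ (α - 1) * v r) := by
        rw [rightInt, ← integral_const_mul (1 / Real.Gamma α)]
        congr 1
        refine setIntegral_congr_fun measurableSet_Ioo fun t _ => ?_
        rw [rightInt, mul_left_comm, ← integral_const_mul]
        simp only [mul_assoc]
    _ = 1 / Real.Gamma β * (1 / Real.Gamma α * ∫ r in Ioo s T, ∫ t in Ioo s r,
          (t - s) ^ (β - 1) * (r - t) ^ (α - 1) * v r) := by
        rw [integral_Ioo_integral_Ioo_swap
          (F := fun t r => (t - s) ^ (β - 1) * (r - t) ^ (α - 1) * v r)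
          (integrable_triangle_mul_sub_rpow_mul (by linarith) (by fun_prop)
            (integrableOn_Ioo_sub_rpow (by linarith) s T) hv hvM)]
    _ = 1 / Real.Gamma β * (1 / Real.Gamma α * ∫ r in Ioo s T, Real.Gamma β * Real.Gamma α /
          Real.Gamma (α + β) * ((r - s) ^ (α + β - 1) * v r)) := by
        congr 2
        refine setIntegral_congr_fun measurableSet_Ioo fun r hr => ?_
        rw [integral_mul_const, hkernel r hr]
        ring
    _ = rightInt (α + β) T v s := by
        rw [integral_const_mul, rightInt]
        field_simp

theorem rightInt_one (T : ℝ) (v : ℝ → ℝ) (s : ℝ) :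
    rightInt 1 T v s = ∫ r in Ioo s T, v r := by
  simp [rightInt]

theorem integral_leftInt_mul {β T M : ℝ} (hβ : 0 < β) {w φ : ℝ → ℝ} (hw : Measurable w)
    (hwi : IntegrableOn w (Ioo 0 T)) (hφ : Measurable φ)
    (hφM : ∀ t ∈ Ioo 0 T, |φ t| ≤ M) :
    ∫ t in Ioo 0 T, leftInt β w t * φ t = ∫ s in Ioo 0 T, w s * rightInt β T φ s := by
  calc ∫ t in Ioo 0 T, leftInt β w t * φ t
      = 1 / Real.Gamma β *
          ∫ t in Ioo 0 T, ∫ s in Ioo 0 t, w s * (t - s) ^ (β - 1) * φ t := by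
        rw [← integral_const_mul]
        refine setIntegral_congr_fun measurableSet_Ioo fun t _ => ?_
        rw [leftInt, mul_assoc, ← integral_mul_const]
        congr 1
        exact integral_congr_ae (.of_forall fun s => by ring)
    _ = 1 / Real.Gamma β *
          ∫ s in Ioo 0 T, ∫ t in Ioo s T, w s * (t - s) ^ (β - 1) * φ t := by
        rw [integral_Ioo_integral_Ioo_swap (F := fun s t => w s * (t - s) ^ (β - 1) * φ t)
          (integrable_triangle_mul_sub_rpow_mul (by linarith) hw hwi hφ hφM)]
    _ = ∫ s in Ioo 0 T, w s * rightInt β T φ s := by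
        rw [← integral_const_mul]
        refine setIntegral_congr_fun measurableSet_Ioo fun s _ => ?_
        simp only [rightInt, ← integral_const_mul]
        exact integral_congr_ae (.of_forall fun t => by ring)

theorem integral_Ioo_deriv {f : ℝ → ℝ} (hf : ContDiff ℝ 1 f) {a b : ℝ} (hab : a ≤ b) :
    ∫ x in Ioo a b, deriv f x = f b - f a := by
  rw [← integral_Ioc_eq_integral_Ioo, ← intervalIntegral.integral_of_le hab]
  exact intervalIntegral.integral_deriv_eq_sub
    (fun x _ => (hf.differentiable one_ne_zero).differentiableAt)
    ((hf.continuous_deriv le_rfl).intervalIntegrable a b)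

theorem statement_8_general (α T : ℝ) (hα : α ∈ Ioo (0:ℝ) 1)
    (u η : ℝ → ℝ) (hu : ContDiff ℝ 1 u) (hη : ContDiff ℝ 1 η)
    (hηT : η T = 0) :
    ∫ t in Ioo (0:ℝ) T, deriv u t * η t =
      -∫ t in Ioo (0:ℝ) T, caputo1 α u t * rightInt α T (deriv η) t := by
  obtain ⟨M, hM⟩ := isCompact_Icc.exists_bound_of_continuousOn
    (hη.continuous_deriv le_rfl).continuousOn (s := Icc 0 T)
  have hJη : ∀ t ∈ Ioo 0 T,
      |rightInt α T (deriv η) t| ≤ M * T ^ α / Real.Gamma (α + 1) :=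
    fun t ht => by simpa using abs_rightInt_le hα.1 hM (Ioo_subset_Icc_self ht)
  rw [caputo1_eq_leftInt, integral_leftInt_mul (sub_pos.mpr hα.2) (measurable_deriv u)
    ((hu.continuous_deriv le_rfl).integrableOn_Icc.mono_set Ioo_subset_Icc_self)
    (measurable_rightInt α T (measurable_deriv η)) hJη, ← integral_neg]
  refine setIntegral_congr_fun measurableSet_Ioo fun s hs => ?_
  rw [rightInt_rightInt hα.1 (sub_pos.mpr hα.2) (measurable_deriv η)
    (fun y hy => hM y ⟨hs.1.le.trans hy.1.le, hy.2.le⟩), add_sub_cancel, rightInt_one,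
    integral_Ioo_deriv hη hs.2.le, hηT]
  ring

/-- Lemma 7.1, first identity: fractional integration by parts. -/
theorem statement_8 (α T : ℝ) (hα : α ∈ Ioo (0:ℝ) 1) (hT : 0 < T)
    (u η : ℝ → ℝ) (hu : ContDiff ℝ 1 u) (hη : ContDiff ℝ 1 η)
    (hu0 : u 0 = 0) (hηT : η T = 0) :
    ∫ t in Ioo (0:ℝ) T, deriv u t * η t =
      -∫ t in Ioo (0:ℝ) T, caputo1 α u t * rightInt α T (deriv η) t :=
  statement_8_general α T hα u η hu hη hηT
end

section
/- Let d ≥ 1 and δ ∈ (0,1), and let A = (a^{ij})_{1≤i,j≤d} be a real d×d matrix (not necessarily symmetric) satisfying a^{ij} ξ_i ξ_j ≥ δ|ξ|² for all ξ ∈ ℝ^d and |a^{ij}| ≤ δ^{−1} for all i,j. Define the matrix = (â^{ij}) by â^{11} = 1/a^{11}; â^{1j} = 0 for j = 2,…,d; â^{i1} = (a^{1i} + a^{i1})/a^{11} for i = 2,…,d; and â^{ij} = a^{ij} for i,j = 2,…,d. Then â^{ij} ξ_i ξ_j ≥ δ³ |ξ|² for all ξ ∈ ℝ^d. -/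
/-!
Substituting `η_1 = ξ_1 / a^{11}` turns the quadratic form of `Â` at `ξ` into that of `A` at `η`.
Since `1 / a^{11} ≥ δ` and `δ ≤ 1`, we have `|η|² ≥ δ² |ξ|²`, and ellipticity of `A` at `η`
supplies the third factor `δ`.
-/

noncomputable section

/-- The transformed coefficient matrix `Â` arising from the change of variables
`y_1 = ∫_0^{x_1} dr / a^{11}(r)`: with `z` the first index,
`â^{11} = 1/a^{11}`, `â^{1j} = 0` for `j ≠ 1`, `â^{i1} = (a^{1i} + a^{i1})/a^{11}` for
`i ≠ 1`, and `â^{ij} = a^{ij}` otherwise. -/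
def hatMat {d : ℕ} (a : Fin d → Fin d → ℝ) (z : Fin d) (i j : Fin d) : ℝ :=
  if i = z then (if j = z then 1 / a z z else 0)
  else (if j = z then (a z i + a i z) / a z z else a i j)

end

def IsElliptic {ι : Type*} [Fintype ι] (δ : ℝ) (a : ι → ι → ℝ) : Prop :=
  ∀ ξ : ι → ℝ, δ * ∑ i, ξ i ^ 2 ≤ ∑ i, ∑ j, a i j * ξ i * ξ j

theorem IsElliptic.le_apply_self {ι : Type*} [Fintype ι] [DecidableEq ι] {δ : ℝ}
    {a : ι → ι → ℝ} (h : IsElliptic δ a) (z : ι) : δ ≤ a z z := by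
  simpa [Pi.single_apply, apply_ite (· ^ 2), ite_mul, mul_ite] using h (Pi.single z 1)

theorem mul_sum_sq_le_sum_sq_update {ι : Type*} [Fintype ι] [DecidableEq ι] {δ t : ℝ}
    (hδ₀ : 0 ≤ δ) (hδ₁ : δ ≤ 1) (ht : δ ≤ t) (ξ : ι → ℝ) (z : ι) :
    δ ^ 2 * ∑ i, ξ i ^ 2 ≤ ∑ i, Function.update ξ z (t * ξ z) i ^ 2 := by
  rw [Finset.mul_sum]
  refine Finset.sum_le_sum fun i _ => ?_
  rcases eq_or_ne i z with rfl | hi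
  · rw [Function.update_self, mul_pow]
    gcongr
  · rw [Function.update_of_ne hi]
    nlinarith [sq_nonneg (ξ i), mul_le_mul hδ₁ hδ₁ hδ₀ zero_le_one]

/- Entrywise, `Â` at `ξ` differs from `A` at `η` by the terms `f`, which move the off-diagonal
part of row `z` into column `z` and therefore cancel in the double sum. -/
theorem sum_hatMat_mul_mul_eq {d : ℕ} (a : Fin d → Fin d → ℝ) (z : Fin d) (hz : a z z ≠ 0)
    (ξ : Fin d → ℝ) :
    ∑ i, ∑ j, hatMat a z i j * ξ i * ξ j =
      ∑ i, ∑ j, a i j * Function.update ξ z ((a z z)⁻¹ * ξ z) i *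
        Function.update ξ z ((a z z)⁻¹ * ξ z) j := by
  set η := Function.update ξ z ((a z z)⁻¹ * ξ z)
  set f : Fin d → ℝ := fun k => a z k * η z * η k
  have hξ : ξ = Function.update η z (a z z * η z) := by
    simp [η, mul_inv_cancel_left₀ hz]
  have pointwise : ∀ i j, hatMat a z i j * ξ i * ξ j =
      a i j * η i * η j + (if j = z then f i else 0) - (if i = z then f j else 0) := by
    intro i j
    rw [hξ]
    simp only [hatMat, f, Function.update_apply]
    split_ifs <;> subst_vars <;> field_simp <;> ring
  simp only [pointwise, Finset.sum_sub_distrib, Finset.sum_add_distrib, Finset.sum_ite_eq',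
    Finset.mem_univ, if_true, Finset.sum_ite_irrel, Finset.sum_const_zero]
  ring

theorem IsElliptic.hatMat {d : ℕ} {δ : ℝ} {a : Fin d → Fin d → ℝ} (h : IsElliptic δ a)
    (hδ₀ : 0 < δ) (hδ₁ : δ ≤ 1) (z : Fin d) (hz : a z z ≤ δ⁻¹) :
    IsElliptic (δ ^ 3) (hatMat a z) := by
  intro ξ
  have hpos : 0 < a z z := hδ₀.trans_le (h.le_apply_self z)
  have hinv : δ ≤ (a z z)⁻¹ := (le_inv_comm₀ hpos hδ₀).mp hz
  rw [sum_hatMat_mul_mul_eq a z hpos.ne']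
  calc δ ^ 3 * ∑ i, ξ i ^ 2 = δ * (δ ^ 2 * ∑ i, ξ i ^ 2) := by ring
    _ ≤ δ * ∑ i, Function.update ξ z ((a z z)⁻¹ * ξ z) i ^ 2 := by
      gcongr
      exact mul_sum_sq_le_sum_sq_update hδ₀.le hδ₁ hinv ξ z
    _ ≤ _ := h _

/-- ellipticity of the transformed coefficient matrix. -/
theorem statement_17 (d : ℕ) (hd : 0 < d) (δ : ℝ) (hδ : δ ∈ Set.Ioo (0:ℝ) 1)
    (a : Fin d → Fin d → ℝ)
    (hell : ∀ ξ : Fin d → ℝ, δ * ∑ i, ξ i ^ 2 ≤ ∑ i, ∑ j, a i j * ξ i * ξ j)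
    (hbd : ∀ i j, |a i j| ≤ δ⁻¹) :
    ∀ ξ : Fin d → ℝ,
      δ ^ 3 * ∑ i, ξ i ^ 2 ≤ ∑ i, ∑ j, hatMat a ⟨0, hd⟩ i j * ξ i * ξ j :=
  IsElliptic.hatMat hell hδ.1 hδ.2.le _ (le_of_abs_le (hbd _ _))
end
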